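/- The function f(x) = H((1 − √x)/2) is concave on the interval [0, 1], where H is the binary entropy function. -/

import Mathlib

open Real Set

/-- auxiliary: derivative of the comparison function. -/
lemma binH_aux_hasDerivAt_F {u : ℝ} (hu : u ∈ Set.Ioo (0:ℝ) 1) :
    HasDerivAt (fun u : ℝ => u/(1+u) + u/(1-u) - (Real.log (1+u) - Real.log (1-u)))
      (u/(1-u)^2 - u/(1+u)^2) u := by
  obtain ⟨h0, h1⟩ := hu
  have hp : (1:ℝ) + u ≠ 0 := by linarith
  have hq : (1:ℝ) - u ≠ 0 := by linarith
  have a1 : HasDerivAt (fun u : ℝ => u/(1+u)) ((1*(1+u) - u*1)/(1+u)^2) u :=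
    (hasDerivAt_id u).div ((hasDerivAt_id u).const_add 1) hp
  have a2 : HasDerivAt (fun u : ℝ => u/(1-u)) ((1*(1-u) - u*(-1))/(1-u)^2) u :=
    (hasDerivAt_id u).div ((hasDerivAt_id u).const_sub 1) hq
  have a3 : HasDerivAt (fun u : ℝ => Real.log (1+u)) (1/(1+u)) u :=
    ((hasDerivAt_id u).const_add 1).log hp
  have a4 : HasDerivAt (fun u : ℝ => Real.log (1-u)) ((-1)/(1-u)) u :=
    ((hasDerivAt_id u).const_sub 1).log hq
  have := ((a1.add a2).sub (a3.sub a4))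
  refine this.congr_deriv ?_
  field_simp
  ring

/-- `log(1+u) − log(1−u) ≤ u/(1+u) + u/(1−u)` on `[0,1)`. -/
lemma binH_aux1 {u : ℝ} (h0 : 0 ≤ u) (h1 : u < 1) :
    Real.log (1+u) - Real.log (1-u) ≤ u/(1+u) + u/(1-u) := by
  have mono : MonotoneOn
      (fun u : ℝ => u/(1+u) + u/(1-u) - (Real.log (1+u) - Real.log (1-u)))
      (Set.Ico (0:ℝ) 1) := by
    apply monotoneOn_of_deriv_nonneg (convex_Ico 0 1)
    · apply ContinuousOn.sub
      · apply ContinuousOn.add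
        · exact (continuousOn_id.div (continuous_const.add continuous_id).continuousOn
            (fun x hx => by have := hx.1; have := hx.2; intro h; simp at *; linarith))
        · exact (continuousOn_id.div (continuous_const.sub continuous_id).continuousOn
            (fun x hx => by have := hx.1; have := hx.2; intro h; simp at *; linarith))
      · apply ContinuousOn.sub
        · exact (Real.continuousOn_log.comp (continuous_const.add continuous_id).continuousOn
            (fun x hx => by have := hx.2; simp; intro h; nlinarith [hx.1]))
        · exact (Real.continuousOn_log.comp (continuous_const.sub continuous_id).continuousOn
            (fun x hx => by have := hx.2; simp; intro h; linarith))
    · rw [interior_Ico]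
      intro x hx
      exact (binH_aux_hasDerivAt_F hx).differentiableAt.differentiableWithinAt
    · rw [interior_Ico]
      intro x hx
      rw [(binH_aux_hasDerivAt_F hx).deriv]
      obtain ⟨hx0, hx1⟩ := hx
      have h2 : (0:ℝ) < (1-x)^2 := by nlinarith
      have h3 : x/(1+x)^2 ≤ x/(1-x)^2 := by
        apply div_le_div_of_nonneg_left hx0.le h2
        nlinarith
      linarith
  have key := mono (Set.mem_Ico.2 ⟨le_refl 0, by norm_num⟩) (Set.mem_Ico.2 ⟨h0, h1⟩) h0
  simp at key
  linarith

/-- `u ↦ (log(1+u) − log(1−u))/u` has nonneg derivative on `(0,1)`. -/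
lemma binH_aux_hasDerivAt_phi {u : ℝ} (hu : u ∈ Set.Ioo (0:ℝ) 1) :
    HasDerivAt (fun u : ℝ => (Real.log (1+u) - Real.log (1-u))/u)
      (((1/(1+u) - (-1)/(1-u)) * u - (Real.log (1+u) - Real.log (1-u)) * 1) / u^2) u := by
  obtain ⟨h0, h1⟩ := hu
  have hp : (1:ℝ) + u ≠ 0 := by linarith
  have hq : (1:ℝ) - u ≠ 0 := by linarith
  have a3 : HasDerivAt (fun u : ℝ => Real.log (1+u)) (1/(1+u)) u :=
    ((hasDerivAt_id u).const_add 1).log hp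
  have a4 : HasDerivAt (fun u : ℝ => Real.log (1-u)) ((-1)/(1-u)) u :=
    ((hasDerivAt_id u).const_sub 1).log hq
  exact (a3.sub a4).div (hasDerivAt_id u) h0.ne'

lemma binH_aux_phi_mono :
    MonotoneOn (fun u : ℝ => (Real.log (1+u) - Real.log (1-u))/u) (Set.Ioo (0:ℝ) 1) := by
  apply monotoneOn_of_deriv_nonneg (convex_Ioo 0 1)
  · intro x hx
    exact (binH_aux_hasDerivAt_phi hx).differentiableAt.continuousAt.continuousWithinAt
  · rw [interior_Ioo]
    intro x hx
    exact (binH_aux_hasDerivAt_phi hx).differentiableAt.differentiableWithinAt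
  · rw [interior_Ioo]
    intro x hx
    rw [(binH_aux_hasDerivAt_phi hx).deriv]
    obtain ⟨hx0, hx1⟩ := hx
    have hp : (0:ℝ) < 1 + x := by linarith
    have hq : (0:ℝ) < 1 - x := by linarith
    have key := binH_aux1 hx0.le hx1
    have hnum : 0 ≤ (1/(1+x) - (-1)/(1-x)) * x - (Real.log (1+x) - Real.log (1-x)) * 1 := by
      have e : (1/(1+x) - (-1)/(1-x)) * x = x/(1+x) + x/(1-x) := by
        field_simp; ring
      rw [e]; linarith
    positivity

/-- derivative of `t ↦ binEntropy ((1 − √t)/2)` on `(0,1)`. -/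
lemma binH_aux_hasDerivAt_g {t : ℝ} (ht : t ∈ Set.Ioo (0:ℝ) 1) :
    HasDerivAt (fun t : ℝ => Real.binEntropy ((1 - Real.sqrt t)/2))
      (-((Real.log (1 + Real.sqrt t) - Real.log (1 - Real.sqrt t)) / (Real.sqrt t * 4))) t := by
  obtain ⟨ht0, ht1⟩ := ht
  set u := Real.sqrt t with hudef
  have hu0 : 0 < u := Real.sqrt_pos.2 ht0
  have hu1 : u < 1 := by
    rw [hudef, show (1:ℝ) = Real.sqrt 1 by simp]
    exact Real.sqrt_lt_sqrt ht0.le ht1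
  have hinner : HasDerivAt (fun t : ℝ => (1 - Real.sqrt t)/2) (-(1/(2*u))/2) t :=
    (((Real.hasDerivAt_sqrt ht0.ne').const_sub 1).div_const 2)
  have hx0 : (1 - u)/2 ≠ 0 := by intro h; rw [div_eq_zero_iff] at h; simp at h; linarith [h]
  have hx1 : (1 - u)/2 ≠ 1 := by intro h; rw [div_eq_one_iff_eq (by norm_num)] at h; linarith
  have houter := Real.hasDerivAt_binEntropy hx0 hx1
  have := houter.comp t hinner
  refine this.congr_deriv ?_
  have e1 : 1 - (1 - u)/2 = (1+u)/2 := by ring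
  rw [e1, Real.log_div (by linarith) (by norm_num), Real.log_div (by linarith) (by norm_num)]
  have hu' : u ≠ 0 := hu0.ne'
  field_simp
  ring

lemma binH_aux_g_concave :
    ConcaveOn ℝ (Set.Icc (0:ℝ) 1) (fun t : ℝ => Real.binEntropy ((1 - Real.sqrt t)/2)) := by
  apply AntitoneOn.concaveOn_of_deriv (convex_Icc 0 1)
  · exact (Real.binEntropy_continuous.comp
      ((continuous_const.sub Real.continuous_sqrt).div_const 2)).continuousOn
  · rw [interior_Icc]
    intro x hx
    exact (binH_aux_hasDerivAt_g hx).differentiableAt.differentiableWithinAt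
  · rw [interior_Icc]
    intro s hs t ht hst
    rw [(binH_aux_hasDerivAt_g hs).deriv, (binH_aux_hasDerivAt_g ht).deriv]
    have hus : Real.sqrt s ∈ Set.Ioo (0:ℝ) 1 := by
      constructor
      · exact Real.sqrt_pos.2 hs.1
      · rw [show (1:ℝ) = Real.sqrt 1 by simp]; exact Real.sqrt_lt_sqrt hs.1.le hs.2
    have hut : Real.sqrt t ∈ Set.Ioo (0:ℝ) 1 := by
      constructor
      · exact Real.sqrt_pos.2 ht.1
      · rw [show (1:ℝ) = Real.sqrt 1 by simp]; exact Real.sqrt_lt_sqrt ht.1.le ht.2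
    have hle : Real.sqrt s ≤ Real.sqrt t := Real.sqrt_le_sqrt hst
    have key := binH_aux_phi_mono hus hut hle
    simp only at key
    have e1 : ∀ u : ℝ, (Real.log (1+u) - Real.log (1-u)) / (u * 4)
        = ((Real.log (1+u) - Real.log (1-u)) / u) / 4 := by
      intro u; rw [div_div]
    rw [neg_le_neg_iff, e1, e1]
    linarith



/-- The binary entropy function `H(x) = −x·log₂ x − (1−x)·log₂(1−x)`
(with `H(0) = H(1) = 0`, by the convention `logb 2 0 = 0`). -/
noncomputable def binH (x : ℝ) : ℝ :=
  -(x * Real.logb 2 x) - (1 - x) * Real.logb 2 (1 - x)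

/-- The function `f(x) = H((1 − √x)/2)` is concave on `[0, 1]`,
where `H` is the binary entropy function. -/
theorem concaveOn_binH_sqrt :
    ConcaveOn ℝ (Set.Icc (0 : ℝ) 1) (fun x => binH ((1 - Real.sqrt x) / 2)) := by
  have h := binH_aux_g_concave.smul (c := (Real.log 2)⁻¹) (by positivity)
  refine h.congr ?_
  intro x _
  simp only [Pi.smul_apply, smul_eq_mul, binH, Real.binEntropy, Real.logb, Real.log_inv]
  ring
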